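/- arXiv:2207.10050 — 2 statements merged into one kernel-verified Lean document; each statement's English description precedes it below -/
import Mathlib

section
/- For real numbers a > 0, b > 0, the minimum value of g(d) = -a·log(d) - b·log(1-d) over d ∈ (0,1) equals (a+b)·H(a/(a+b)), where H(x) = -x·log(x) - (1-x)·log(1-x) is the binary entropy function. -/
open Real Set

/-! The candidate minimiser is `d = a/(a+b)`, and `g(a/(a+b)) = (a+b) H(a/(a+b))` is an identity.
Minimality is Gibbs' inequality for two-point distributions: applying `log t ≤ t - 1` to
`t = (a+b)d/a` and `t = (a+b)(1-d)/b` and adding the two weighted inequalities gives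
`a log d + b log (1-d) ≤ a log (a/(a+b)) + b log (b/(a+b))`. -/

lemma mul_log_le_mul_log_div_add_sub {a d s : ℝ} (ha : 0 < a) (hd : 0 < d) (hs : 0 < s) :
    a * log d ≤ a * log (a / s) + s * d - a := by
  have hlog : log (s * d / a) ≤ s * d / a - 1 := log_le_sub_one_of_pos (by positivity)
  have hsplit : log (s * d / a) = log d - log (a / s) := by
    rw [← log_div hd.ne' (by positivity)]
    congr 1
    field_simp
  have hmul : a * (s * d / a - 1) = s * d - a := by field_simp
  nlinarith [mul_le_mul_of_nonneg_left hlog ha.le]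

lemma mul_log_add_mul_log_le_of_add_le_one {a b d e : ℝ} (ha : 0 < a) (hb : 0 < b)
    (hd : 0 < d) (he : 0 < e) (hde : d + e ≤ 1) :
    a * log d + b * log e ≤ a * log (a / (a + b)) + b * log (b / (a + b)) := by
  have hs : 0 < a + b := add_pos ha hb
  have hd' := mul_log_le_mul_log_div_add_sub ha hd hs
  have he' := mul_log_le_mul_log_div_add_sub hb he hs
  nlinarith

/-- The minimum value of `g(d) = -a log d - b log(1-d)` over `(0,1)` equals
`(a+b) · H(a/(a+b))` where `H` is the binary (natural-log) entropy. -/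
theorem stmt_1 (a b : ℝ) (ha : 0 < a) (hb : 0 < b)
    (g H : ℝ → ℝ)
    (hg : ∀ d, g d = -a * Real.log d - b * Real.log (1 - d))
    (hH : ∀ x, H x = -x * Real.log x - (1 - x) * Real.log (1 - x)) :
    IsLeast (g '' Set.Ioo (0 : ℝ) 1) ((a + b) * H (a / (a + b))) := by
  have hs : 0 < a + b := add_pos ha hb
  have hcompl : 1 - a / (a + b) = b / (a + b) := by field_simp; ring
  have hvalue : (a + b) * H (a / (a + b)) = g (a / (a + b)) := by
    rw [hH, hg, hcompl]
    field_simp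
  refine ⟨⟨a / (a + b), ⟨by positivity, by rw [div_lt_one hs]; linarith⟩, hvalue.symm⟩, ?_⟩
  rintro _ ⟨d, ⟨hd0, hd1⟩, rfl⟩
  rw [hvalue, hg, hg, hcompl]
  linarith [mul_log_add_mul_log_le_of_add_le_one ha hb hd0 (sub_pos.2 hd1) (by linarith)]
end

section
/- Let p and q be probability densities on a measurable space X with p, q > 0, and define d*(x) = p(x)/(p(x)+q(x)). Then E_{x∼p}[-log d*(x)] + E_{x∼q}[-log(1-d*(x))] = 2·log 2 - 2·JSD(p, q), where JSD(p,q) = (1/2)·KL(p ‖ m) + (1/2)·KL(q ‖ m) with m = (p+q)/2, and d* minimizes the left-hand objective over all measurable d : X → (0,1). -/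
open Real MeasureTheory

/-!
Since `1 - d* = q / (p + q)` and `p / (p + q) = (p / m) / 2`, the two cross-entropy terms at `d*`
are `log 2 - KL(p ‖ m)` and `log 2 - KL(q ‖ m)`, because `p` and `q` integrate to `1`.
Optimality of `d*` holds pointwise: by `log x ≤ x - 1`, for weights `a, b > 0` the cross entropy
`-(a log t + b log (1 - t))` is minimised at `t = a / (a + b)`, and integrating this inequality
gives the claim.
-/
theorem Real.mul_log_div_le_sub {a c : ℝ} (ha : 0 < a) (hc : 0 < c) :
    a * log (c / a) ≤ c - a :=
  calc a * log (c / a) ≤ a * (c / a - 1) :=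
        mul_le_mul_of_nonneg_left (log_le_sub_one_of_pos (by positivity)) ha.le
    _ = c - a := by field_simp

theorem Real.one_sub_div_add {a b : ℝ} (h : a + b ≠ 0) : 1 - a / (a + b) = b / (b + a) := by
  rw [add_comm b a]; field_simp; ring

theorem Real.binary_cross_entropy_le {a b t : ℝ} (ha : 0 < a) (hb : 0 < b)
    (ht : t ∈ Set.Ioo (0 : ℝ) 1) :
    a * -log (a / (a + b)) + b * -log (1 - a / (a + b)) ≤ a * -log t + b * -log (1 - t) := by
  obtain ⟨ht0, ht1⟩ := ht
  have hs : 0 < a + b := by positivity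
  have h1t : 0 < 1 - t := by linarith
  have hA := mul_log_div_le_sub ha (mul_pos ht0 hs)
  have hB := mul_log_div_le_sub hb (mul_pos h1t hs)
  rw [log_div (by positivity) ha.ne', log_mul ht0.ne' hs.ne'] at hA
  rw [log_div (by positivity) hb.ne', log_mul h1t.ne' hs.ne'] at hB
  rw [one_sub_div_add hs.ne', add_comm b a, log_div ha.ne' hs.ne', log_div hb.ne' hs.ne']
  nlinarith

theorem Real.neg_log_div_add {a b : ℝ} (ha : 0 < a) (hb : 0 < b) :
    -log (a / (a + b)) = log 2 - log (a / ((a + b) / 2)) := by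
  rw [div_div_eq_mul_div, mul_div_right_comm, log_mul (by positivity) two_ne_zero]
  ring

theorem integral_mul_sub_of_integral_eq_one {X : Type*} [MeasurableSpace X] {μ : Measure X}
    {p g : X → ℝ} (hp1 : ∫ x, p x ∂μ = 1) (hg : Integrable (fun x => p x * g x) μ) (c : ℝ) :
    ∫ x, p x * (c - g x) ∂μ = c - ∫ x, p x * g x ∂μ := by
  simp_rw [mul_sub]
  rw [integral_sub ((integrable_of_integral_eq_one hp1).mul_const c) hg, integral_mul_const,
    hp1, one_mul]

theorem stmt_12_general {X : Type*} [MeasurableSpace X] (μ : Measure X)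
    (p q : X → ℝ)
    (hp : ∀ x, 0 < p x) (hq : ∀ x, 0 < q x)
    (hp1 : ∫ x, p x ∂μ = 1) (hq1 : ∫ x, q x ∂μ = 1)
    (dstar m : X → ℝ)
    (hdstar : ∀ x, dstar x = p x / (p x + q x))
    (hm : ∀ x, m x = (p x + q x) / 2)
    (JSD : ℝ)
    (hJSD : JSD = (1/2) * ∫ x, p x * Real.log (p x / m x) ∂μ
        + (1/2) * ∫ x, q x * Real.log (q x / m x) ∂μ)
    (hint1 : Integrable (fun x => p x * (-Real.log (dstar x))) μ)
    (hint2 : Integrable (fun x => q x * (-Real.log (1 - dstar x))) μ)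
    (hint3 : Integrable (fun x => p x * Real.log (p x / m x)) μ)
    (hint4 : Integrable (fun x => q x * Real.log (q x / m x)) μ) :
    (∫ x, p x * (-Real.log (dstar x)) ∂μ) + (∫ x, q x * (-Real.log (1 - dstar x)) ∂μ)
      = 2 * Real.log 2 - 2 * JSD ∧
    ∀ d : X → ℝ, Measurable d → (∀ x, d x ∈ Set.Ioo (0 : ℝ) 1) →
      Integrable (fun x => p x * (-Real.log (d x))) μ →
      Integrable (fun x => q x * (-Real.log (1 - d x))) μ →
      (∫ x, p x * (-Real.log (dstar x)) ∂μ) + (∫ x, q x * (-Real.log (1 - dstar x)) ∂μ)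
        ≤ (∫ x, p x * (-Real.log (d x)) ∂μ) + (∫ x, q x * (-Real.log (1 - d x)) ∂μ) := by
  have hP : ∫ x, p x * -log (dstar x) ∂μ = log 2 - ∫ x, p x * log (p x / m x) ∂μ := by
    rw [← integral_mul_sub_of_integral_eq_one hp1 hint3]
    congr 1 with x
    rw [hdstar, hm, neg_log_div_add (hp x) (hq x)]
  have hQ : ∫ x, q x * -log (1 - dstar x) ∂μ = log 2 - ∫ x, q x * log (q x / m x) ∂μ := by
    rw [← integral_mul_sub_of_integral_eq_one hq1 hint4]
    congr 1 with x
    rw [hdstar, hm, one_sub_div_add (add_pos (hp x) (hq x)).ne', neg_log_div_add (hq x) (hp x),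
      add_comm (q x)]
  refine ⟨by rw [hP, hQ, hJSD]; ring, fun d _ hd hintp hintq => ?_⟩
  rw [← integral_add hint1 hint2, ← integral_add hintp hintq]
  refine integral_mono (hint1.add hint2) (hintp.add hintq) fun x => ?_
  simpa only [hdstar] using binary_cross_entropy_le (hp x) (hq x) (hd x)

/-- Optimal-discriminator characterization: with densities `p, q > 0` (w.r.t. a base measure
`μ`) and `d*(x) = p(x)/(p(x)+q(x))`, the discriminator objective at `d*` equals
`2 log 2 - 2 JSD(p,q)`, and `d*` minimizes the objective over all measurable
`d : X → (0,1)` (all expectations assumed finite). -/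
theorem stmt_12 {X : Type*} [MeasurableSpace X] (μ : Measure X) [SigmaFinite μ]
    (p q : X → ℝ) (hpm : Measurable p) (hqm : Measurable q)
    (hp : ∀ x, 0 < p x) (hq : ∀ x, 0 < q x)
    (hp1 : ∫ x, p x ∂μ = 1) (hq1 : ∫ x, q x ∂μ = 1)
    (dstar m : X → ℝ)
    (hdstar : ∀ x, dstar x = p x / (p x + q x))
    (hm : ∀ x, m x = (p x + q x) / 2)
    (JSD : ℝ)
    (hJSD : JSD = (1/2) * ∫ x, p x * Real.log (p x / m x) ∂μ
        + (1/2) * ∫ x, q x * Real.log (q x / m x) ∂μ)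
    (hint1 : Integrable (fun x => p x * (-Real.log (dstar x))) μ)
    (hint2 : Integrable (fun x => q x * (-Real.log (1 - dstar x))) μ)
    (hint3 : Integrable (fun x => p x * Real.log (p x / m x)) μ)
    (hint4 : Integrable (fun x => q x * Real.log (q x / m x)) μ) :
    (∫ x, p x * (-Real.log (dstar x)) ∂μ) + (∫ x, q x * (-Real.log (1 - dstar x)) ∂μ)
      = 2 * Real.log 2 - 2 * JSD ∧
    ∀ d : X → ℝ, Measurable d → (∀ x, d x ∈ Set.Ioo (0 : ℝ) 1) →
      Integrable (fun x => p x * (-Real.log (d x))) μ →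
      Integrable (fun x => q x * (-Real.log (1 - d x))) μ →
      (∫ x, p x * (-Real.log (dstar x)) ∂μ) + (∫ x, q x * (-Real.log (1 - dstar x)) ∂μ)
        ≤ (∫ x, p x * (-Real.log (d x)) ∂μ) + (∫ x, q x * (-Real.log (1 - d x)) ∂μ) :=
  stmt_12_general μ p q hp hq hp1 hq1 dstar m hdstar hm JSD hJSD hint1 hint2 hint3 hint4
end
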